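/- For every even integer n ≥ 6, the function x_n is a modular function on Γ₀(2ⁿ): for every matrix (a b; c d) in SL₂(ℤ) with 2ⁿ ∣ c and every τ in the complex upper half-plane ℍ, x_n((aτ+b)/(cτ+d)) = x_n(τ). -/

import Mathlib

open Complex Filter Topology

/-- Jacobi theta function θ₂(τ) = ∑_{n∈ℤ} exp(πiτ(n+1/2)²). -/
noncomputable def θ₂ (τ : ℂ) : ℂ :=
  ∑' n : ℤ, Complex.exp (Real.pi * Complex.I * τ * ((n : ℂ) + 1/2)^2)

/-- Jacobi theta function θ₃(τ) = ∑_{n∈ℤ} exp(πiτn²). -/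
noncomputable def θ₃ (τ : ℂ) : ℂ :=
  ∑' n : ℤ, Complex.exp (Real.pi * Complex.I * τ * (n : ℂ)^2)

/-- x_n(τ) = 2θ₃(2^{n-1}τ)/θ₂(2^{n-1}τ). -/
noncomputable def xfun (n : ℕ) (τ : ℂ) : ℂ :=
  2 * θ₃ (2^(n-1) * τ) / θ₂ (2^(n-1) * τ)

/-- y_n(τ) = θ₂(8τ)/θ₂(2^{n-1}τ). -/
noncomputable def yfun (n : ℕ) (τ : ℂ) : ℂ :=
  θ₂ (8 * τ) / θ₂ (2^(n-1) * τ)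

/-!
Put `w = 2ⁿ⁻¹τ`. If `2ⁿ ∣ c`, then `2ⁿ⁻¹ · (aτ + b)/(cτ + d) = (aw + 2β)/(c'w + d)` with
`β = 2ⁿ⁻²b` and `c' = c/2ⁿ⁻¹` even, i.e. the new matrix lies in `Γ(2)`. Under every
`(a, 2β; c, d) ∈ Γ(2)` the theta functions `θ₂, θ₃` are multiplied by one common nonzero factor,
except for an extra `i^{βd}` on `θ₂`; since `4 ∣ β` once `n ≥ 4`, the ratio `θ₃/θ₂` is invariant.

The transformation rule is checked on the two moves `τ ↦ τ + 2k` and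
`τ ↦ τ/(2kτ + 1) = -1/(-1/τ - 2k)`, using `θ₂(τ + 2) = iθ₂(τ)`, `θ₃(τ + 2) = θ₃(τ)` and the
inversion formulas `θ₂(-1/τ) = √(-iτ) θ₄(τ)`, `θ₃(-1/τ) = √(-iτ) θ₃(τ)`,
`θ₄(-1/τ) = √(-iτ) θ₂(τ)`, which all come from the functional equation of `jacobiTheta₂`.
Precomposing with these moves reduces `d` modulo `2c`, resp. `c` modulo `2d`; this Euclidean
algorithm on the bottom row ends at `c = 0`, where the matrix acts as a translation by `±2β`.
-/

open Real

noncomputable def θ₄ (τ : ℂ) : ℂ := jacobiTheta₂ (1 / 2) τ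

lemma θ₃_eq_jacobiTheta₂ (τ : ℂ) : θ₃ τ = jacobiTheta₂ 0 τ :=
  tsum_congr fun n => by rw [jacobiTheta₂_term]; ring_nf

lemma θ₂_eq_exp_mul_jacobiTheta₂ (τ : ℂ) :
    θ₂ τ = cexp (π * I * τ / 4) * jacobiTheta₂ (τ / 2) τ := by
  rw [jacobiTheta₂, ← tsum_mul_left]
  refine tsum_congr fun n => ?_
  rw [jacobiTheta₂_term, ← Complex.exp_add]
  ring_nf

lemma jacobiTheta₂_add_two_mul_int (z τ : ℂ) (k : ℤ) :
    jacobiTheta₂ z (τ + 2 * k) = jacobiTheta₂ z τ := by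
  rw [mul_comm]
  exact Function.Periodic.int_mul (jacobiTheta₂_add_right z) k τ

lemma jacobiTheta₂_add_int (z τ : ℂ) (k : ℤ) : jacobiTheta₂ (z + k) τ = jacobiTheta₂ z τ := by
  simpa using Function.Periodic.int_mul (f := (jacobiTheta₂ · τ)) (jacobiTheta₂_add_left · τ) k z

lemma θ₃_add_two_mul_int (τ : ℂ) (k : ℤ) : θ₃ (τ + 2 * k) = θ₃ τ := by
  rw [θ₃_eq_jacobiTheta₂, θ₃_eq_jacobiTheta₂, jacobiTheta₂_add_two_mul_int]

lemma θ₄_add_two_mul_int (τ : ℂ) (k : ℤ) : θ₄ (τ + 2 * k) = θ₄ τ :=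
  jacobiTheta₂_add_two_mul_int _ τ k

lemma θ₂_add_two_mul_int (τ : ℂ) (k : ℤ) : θ₂ (τ + 2 * k) = I ^ k * θ₂ τ := by
  have hI : cexp (π * I * (2 * k) / 4) = I ^ k := by
    rw [show π * I * (2 * k) / 4 = k * (π / 2 * I) by ring, exp_int_mul, exp_pi_div_two_mul_I]
  rw [θ₂_eq_exp_mul_jacobiTheta₂, θ₂_eq_exp_mul_jacobiTheta₂, add_div τ,
    mul_div_cancel_left₀ _ two_ne_zero, jacobiTheta₂_add_int, jacobiTheta₂_add_two_mul_int,
    mul_add, add_div, Complex.exp_add, hI]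
  ring

lemma neg_I_mul_cpow_half_ne_zero {τ : ℂ} (hτ : τ ≠ 0) : (-I * τ) ^ (1 / 2 : ℂ) ≠ 0 := by
  rw [Ne, cpow_eq_zero_iff, not_and_or]
  exact Or.inl (mul_ne_zero (neg_ne_zero.2 I_ne_zero) hτ)

lemma jacobiTheta₂_div_neg_one_div (z : ℂ) {τ : ℂ} (hτ : τ ≠ 0) :
    jacobiTheta₂ (z / τ) (-1 / τ) =
      (-I * τ) ^ (1 / 2 : ℂ) * cexp (π * I * z ^ 2 / τ) * jacobiTheta₂ z τ := by
  set s := (-I * τ) ^ (1 / 2 : ℂ)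
  have hs : s ≠ 0 := neg_I_mul_cpow_half_ne_zero hτ
  have hexp : cexp (π * I * z ^ 2 / τ) * cexp (-π * I * z ^ 2 / τ) = 1 := by
    rw [← Complex.exp_add]
    convert Complex.exp_zero using 2
    ring
  rw [jacobiTheta₂_functional_equation z τ, ← mul_assoc, ← mul_assoc,
    show s * cexp (π * I * z ^ 2 / τ) * (1 / s) = cexp (π * I * z ^ 2 / τ) by
      field_simp, hexp, one_mul]

lemma θ₃_neg_one_div {τ : ℂ} (hτ : τ ≠ 0) : θ₃ (-1 / τ) = (-I * τ) ^ (1 / 2 : ℂ) * θ₃ τ := by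
  simpa [θ₃_eq_jacobiTheta₂] using jacobiTheta₂_div_neg_one_div 0 hτ

lemma θ₄_neg_one_div {τ : ℂ} (hτ : τ ≠ 0) : θ₄ (-1 / τ) = (-I * τ) ^ (1 / 2 : ℂ) * θ₂ τ := by
  have h := jacobiTheta₂_div_neg_one_div (τ / 2) hτ
  rw [show τ / 2 / τ = 1 / 2 by field_simp, show π * I * (τ / 2) ^ 2 / τ = π * I * τ / 4 by
    field_simp; ring] at h
  rw [θ₄, h, θ₂_eq_exp_mul_jacobiTheta₂]
  ring

lemma θ₂_neg_one_div {τ : ℂ} (hτ : τ ≠ 0) : θ₂ (-1 / τ) = (-I * τ) ^ (1 / 2 : ℂ) * θ₄ τ := by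
  have hexp : cexp (π * I * (-1 / τ) / 4) * cexp (π * I * (1 / 2) ^ 2 / τ) = 1 := by
    rw [← Complex.exp_add]
    convert Complex.exp_zero using 2
    ring
  rw [θ₂_eq_exp_mul_jacobiTheta₂, show -1 / τ / 2 = -(1 / 2 / τ) by ring, jacobiTheta₂_neg_left,
    jacobiTheta₂_div_neg_one_div _ hτ, θ₄]
  linear_combination ((-I * τ) ^ (1 / 2 : ℂ) * jacobiTheta₂ (1 / 2) τ) * hexp

lemma im_neg_one_div_pos {τ : ℂ} (hτ : 0 < τ.im) : 0 < (-1 / τ).im := by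
  rw [neg_div, neg_im, one_div, inv_im, neg_div, neg_neg]
  exact div_pos hτ (normSq_pos.2 (ne_of_apply_ne im (by simpa using hτ.ne')))

lemma neg_one_div_neg_one_div_sub_two_mul {τ : ℂ} (hτ : τ ≠ 0) (k : ℂ) :
    -1 / (-1 / τ - 2 * k) = τ / (2 * k * τ + 1) := by
  have h : -1 / τ - 2 * k = -(2 * k * τ + 1) / τ := by field_simp; ring
  rw [h, neg_div, neg_div, div_neg, neg_neg, one_div_div]

lemma im_div_two_mul_int_mul_add_one_pos {τ : ℂ} (hτ : 0 < τ.im) (k : ℤ) :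
    0 < (τ / (2 * k * τ + 1)).im := by
  rw [← neg_one_div_neg_one_div_sub_two_mul (ne_of_apply_ne im (by simpa using hτ.ne'))]
  exact im_neg_one_div_pos (by simpa using im_neg_one_div_pos hτ)

lemma exists_θ_div_two_mul_int_mul_add_one {τ : ℂ} (hτ : 0 < τ.im) (k : ℤ) :
    ∃ v ≠ 0, θ₂ (τ / (2 * k * τ + 1)) = v * θ₂ τ ∧ θ₃ (τ / (2 * k * τ + 1)) = v * θ₃ τ := by
  have hτ0 : τ ≠ 0 := ne_of_apply_ne im (by simpa using hτ.ne')
  set σ := -1 / τ + 2 * ((-k : ℤ) : ℂ)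
  have hσ : σ ≠ 0 := ne_of_apply_ne im (by simpa [σ] using (im_neg_one_div_pos hτ).ne')
  have hστ : -1 / σ = τ / (2 * k * τ + 1) := by
    rw [← neg_one_div_neg_one_div_sub_two_mul hτ0]
    push_cast [σ]
    ring
  refine ⟨(-I * σ) ^ (1 / 2 : ℂ) * (-I * τ) ^ (1 / 2 : ℂ),
    mul_ne_zero (neg_I_mul_cpow_half_ne_zero hσ) (neg_I_mul_cpow_half_ne_zero hτ0), ?_, ?_⟩
  · rw [← hστ, θ₂_neg_one_div hσ, θ₄_add_two_mul_int, θ₄_neg_one_div hτ0, mul_assoc]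
  · rw [← hστ, θ₃_neg_one_div hσ, θ₃_add_two_mul_int, θ₃_neg_one_div hτ0, mul_assoc]

lemma I_zpow_add_four_mul (m j : ℤ) : I ^ (m + 4 * j) = I ^ m := by
  rw [zpow_add₀ I_ne_zero, zpow_mul, zpow_ofNat, I_pow_four, one_zpow, mul_one]

lemma exists_natAbs_sub_two_mul_mul_lt {x y : ℤ} (hy : y ≠ 0) (hxy : Odd (x + y)) :
    ∃ k : ℤ, (x - 2 * k * y).natAbs < y.natAbs := by
  -- `k` is the nearest integer to `x / 2y`; the parity of `x + y` excludes a tie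
  set m : ℤ := (y.natAbs : ℤ)
  set q := (x + m) / (2 * m)
  set r := (x + m) % (2 * m)
  have hm : 0 < 2 * m := by omega
  have hdiv : r + 2 * m * q = x + m := Int.emod_add_mul_ediv _ _
  have hr : x - 2 * (y.sign * q) * y = r - m := by
    linear_combination -hdiv - 2 * q * Int.sign_mul_self y
  have hr0 : r ≠ 0 := by
    rintro h
    have : x + m = 2 * (m * q) := by linear_combination -hdiv + h
    obtain ⟨j, hj⟩ := hxy
    omega
  have h0 : 0 ≤ r := Int.emod_nonneg _ hm.ne'
  have h1 : r < 2 * m := Int.emod_lt_of_pos _ hm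
  exact ⟨y.sign * q, by omega⟩

def ThetaCovariant (a β c d : ℤ) : Prop :=
  ∀ τ : ℂ, 0 < τ.im → ∃ u ≠ 0,
    θ₂ ((a * τ + 2 * β) / (c * τ + d)) = I ^ (β * d) * u * θ₂ τ ∧
      θ₃ ((a * τ + 2 * β) / (c * τ + d)) = u * θ₃ τ

lemma thetaCovariant_diag {a : ℤ} (ha : a ≠ 0) : ThetaCovariant a 0 0 a := by
  intro τ _
  have h : ((a : ℂ) * τ + 2 * ((0 : ℤ) : ℂ)) / (((0 : ℤ) : ℂ) * τ + a) = τ := by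
    field_simp [show (a : ℂ) ≠ 0 by exact_mod_cast ha]
    ring
  exact ⟨1, one_ne_zero, by rw [h]; simp, by rw [h]; simp⟩

namespace ThetaCovariant

variable {a β c d : ℤ}

lemma comp_add_two_mul (h : ThetaCovariant a β c d) (hdet : a * d - 2 * β * c = 1) (hc : Even c)
    (k : ℤ) : ThetaCovariant a (β + k * a) c (d + 2 * k * c) := by
  intro τ hτ
  obtain ⟨u, hu, h₂, h₃⟩ := h (τ + 2 * k) (by simpa using hτ)
  have harg : ((a : ℂ) * τ + 2 * ((β + k * a : ℤ) : ℂ)) / (c * τ + ((d + 2 * k * c : ℤ) : ℂ)) =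
      (a * (τ + 2 * k) + 2 * β) / (c * (τ + 2 * k) + d) := by
    push_cast
    ring_nf
  obtain ⟨m, rfl⟩ := hc
  have hexp : I ^ ((β + k * a) * (d + 2 * k * (m + m))) = I ^ (β * d) * I ^ k := by
    rw [← zpow_add₀ I_ne_zero, ← I_zpow_add_four_mul (β * d + k) (k * β * (m + m) + k ^ 2 * a * m)]
    congr 1
    linear_combination k * hdet
  refine ⟨u, hu, ?_, ?_⟩
  · rw [harg, h₂, θ₂_add_two_mul_int, hexp]
    ring
  · rw [harg, h₃, θ₃_add_two_mul_int]

lemma comp_div_two_mul_add_one (h : ThetaCovariant a β c d) (k : ℤ) :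
    ThetaCovariant (a + 4 * k * β) β (c + 2 * k * d) d := by
  intro τ hτ
  have hden : 2 * (k : ℂ) * τ + 1 ≠ 0 := fun h0 ↦
    (im_div_two_mul_int_mul_add_one_pos hτ k).ne' (by rw [h0, div_zero, zero_im])
  obtain ⟨u, hu, h₂, h₃⟩ := h _ (im_div_two_mul_int_mul_add_one_pos hτ k)
  obtain ⟨v, hv, hv₂, hv₃⟩ := exists_θ_div_two_mul_int_mul_add_one hτ k
  have harg : (((a + 4 * k * β : ℤ) : ℂ) * τ + 2 * β) / (((c + 2 * k * d : ℤ) : ℂ) * τ + d) =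
      (a * (τ / (2 * k * τ + 1)) + 2 * β) / (c * (τ / (2 * k * τ + 1)) + d) := by
    rw [mul_div_assoc', mul_div_assoc', div_add' _ _ _ hden, div_add' _ _ _ hden,
      div_div_div_cancel_right₀ hden]
    push_cast
    ring_nf
  refine ⟨u * v, mul_ne_zero hu hv, ?_, ?_⟩
  · rw [harg, h₂, hv₂]
    ring
  · rw [harg, h₃, hv₃]
    ring

end ThetaCovariant

theorem thetaCovariant_of_det_eq_one {a β c d : ℤ} (hdet : a * d - 2 * β * c = 1)
    (hc : Even c) : ThetaCovariant a β c d := by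
  have hd : Odd d := (Int.odd_mul.1 (⟨β * c, by linear_combination hdet⟩ : Odd (a * d))).2
  rcases eq_or_ne c 0 with rfl | hc0
  · obtain ⟨rfl, rfl⟩ | ⟨rfl, rfl⟩ := Int.eq_one_or_neg_one_of_mul_eq_one' (by linarith : a * d = 1)
    · simpa using (thetaCovariant_diag one_ne_zero).comp_add_two_mul (by norm_num) Even.zero β
    · simpa using (thetaCovariant_diag (by norm_num : (-1 : ℤ) ≠ 0)).comp_add_two_mul (by norm_num)
        Even.zero (-β)
  have hd0 : d ≠ 0 := by rintro rfl; simp at hd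
  rcases lt_or_gt_of_ne (show c.natAbs ≠ d.natAbs by
    obtain ⟨c', rfl⟩ := hc; obtain ⟨d', rfl⟩ := hd; omega) with hlt | hgt
  · obtain ⟨k, hk⟩ := exists_natAbs_sub_two_mul_mul_lt hc0 (hd.add_even hc)
    have := thetaCovariant_of_det_eq_one (a := a) (β := β - k * a) (d := d - 2 * k * c)
      (by linear_combination hdet) hc
    simpa using this.comp_add_two_mul (by linear_combination hdet) hc k
  · obtain ⟨k, hk⟩ := exists_natAbs_sub_two_mul_mul_lt hd0 (hc.add_odd hd)
    have := thetaCovariant_of_det_eq_one (a := a - 4 * k * β) (β := β) (c := c - 2 * k * d) (d := d)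
      (by linear_combination hdet) (hc.sub ⟨k * d, by ring⟩)
    simpa using this.comp_div_two_mul_add_one k
termination_by c.natAbs + d.natAbs

lemma ThetaCovariant.θ₃_div_θ₂ {a β c d : ℤ} (h : ThetaCovariant a β c d) (h4 : 4 ∣ β * d)
    {τ : ℂ} (hτ : 0 < τ.im) :
    θ₃ ((a * τ + 2 * β) / (c * τ + d)) / θ₂ ((a * τ + 2 * β) / (c * τ + d)) = θ₃ τ / θ₂ τ := by
  obtain ⟨u, hu, h₂, h₃⟩ := h τ hτ
  obtain ⟨j, hj⟩ := h4
  rw [h₂, h₃, hj, ← zero_add (4 * j), I_zpow_add_four_mul, zpow_zero, one_mul,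
    mul_div_mul_left _ _ hu]

theorem x_modular_general (n : ℕ) (hn : 6 ≤ n)
    (a b c d : ℤ) (hdet : a * d - b * c = 1) (hc : (2 ^ n : ℤ) ∣ c)
    (τ : ℂ) (hτ : 0 < τ.im) :
    xfun n (((a : ℂ) * τ + b) / ((c : ℂ) * τ + d)) = xfun n τ := by
  obtain ⟨m, rfl⟩ : ∃ m, n = m + 4 := ⟨n - 4, by omega⟩
  obtain ⟨c₀, rfl⟩ := hc
  have hw : 0 < ((2 : ℂ) ^ (m + 3) * τ).im := by
    rw [show (2 : ℂ) ^ (m + 3) = ((2 ^ (m + 3) : ℝ) : ℂ) by push_cast; rfl, im_ofReal_mul]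
    positivity
  have hcov := thetaCovariant_of_det_eq_one (a := a) (β := 2 ^ (m + 2) * b) (c := 2 * c₀) (d := d)
    (by linear_combination hdet) (even_two_mul c₀)
  have harg : (2 : ℂ) ^ (m + 3) * ((a * τ + b) / (((2 ^ (m + 4) * c₀ : ℤ) : ℂ) * τ + d)) =
      (a * (2 ^ (m + 3) * τ) + 2 * ((2 ^ (m + 2) * b : ℤ) : ℂ)) /
        (((2 * c₀ : ℤ) : ℂ) * (2 ^ (m + 3) * τ) + d) := by
    push_cast
    ring
  simp only [xfun, show m + 4 - 1 = m + 3 by omega]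
  rw [harg, mul_div_assoc, mul_div_assoc, hcov.θ₃_div_θ₂ ⟨2 ^ m * b * d, by ring⟩ hw]

theorem x_modular (n : ℕ) (hn : 6 ≤ n) (hn2 : Even n)
    (a b c d : ℤ) (hdet : a * d - b * c = 1) (hc : (2 ^ n : ℤ) ∣ c)
    (τ : ℂ) (hτ : 0 < τ.im) :
    xfun n (((a : ℂ) * τ + b) / ((c : ℂ) * τ + d)) = xfun n τ :=
  x_modular_general n hn a b c d hdet hc τ hτ
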